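/- arXiv:2405.16015 — 7 statements merged into one kernel-verified Lean document; each statement's English description precedes it below -/
import Mathlib

section
/- Define polynomials G_s ∈ ℤ[t] by G_0(t) = 1 − 2t and G_{s+1}(t) = G_s(t)² − 2·t^{2^{s+1}} (so G_s(t) = t^{2^s}·F^{∘s}(1/t − 2), where F(y) = y² − 2 and F^{∘s} is the s-fold iterate). Then for every s ≥ 0, in the ring of formal power series ℤ⟦t⟧, the generating function X_{2^s}(t) = ∑_{k≥0} (x (2^s) k)·t^k satisfies X_{2^s}(t)·G_s(t) = t^{2^s}. -/
/-- `xfun n k` is the multiplicity of the indecomposable tilting module `T(2n)` in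
`V^{⊗2k}`, where `V` is the natural representation of `SL₂` in characteristic 2. -/
def xfun : ℕ → ℕ → ℕ
  | 0, 0 => 1
  | 0, _ + 1 => 0
  | _ + 1, 0 => 0
  | n + 1, k + 1 =>
      xfun n k + 2 * ∑ i ∈ Finset.range ((n + 1).factorization 2 + 1), xfun (n + 2 ^ i) k

/-- `G s` is the polynomial `t^{2^s}·F^{∘s}(1/t − 2)` where `F(y) = y² − 2`. -/
noncomputable def G : ℕ → Polynomial ℤ
  | 0 => 1 - 2 * Polynomial.X
  | s + 1 => G s ^ 2 - 2 * Polynomial.X ^ 2 ^ (s + 1)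

/-! The generating functions `Xₙ = ∑ₖ xfun n k tᵏ` are determined by `X₀ = 1` and the recursion
`Xₙ₊₁ = t (Xₙ + 2 ∑_{i ≤ v₂(n+1)} X_{n+2^i})`, because the `k+1`-st coefficients on the left only
involve `k`-th coefficients on the right. The closed form `Xₙ = tⁿ / ∏_{j ∈ bits n} G j` satisfies
the same recursion: writing `n + 1 = 2^r (2q + 1)`, the numbers `n`, `n + 1` and `n + 2^i`
(`i ≤ r`) share their binary digits above `r`, and once denominators are cleared the recursion
becomes `∏_{j<r} G j = G r + 2 ∑_{i≤r} t^(2^i) ∏_{i≤j<r} G j`, which follows by induction on `r`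
from `G (r+1) = G r ^ 2 - 2 t^(2^(r+1))`. For `n = 2^s` the product is just `G s`. -/

open PowerSeries Finset

def SatisfiesTiltingRec {R : Type*} [CommSemiring R] (f : ℕ → R⟦X⟧) : Prop :=
  f 0 = 1 ∧ ∀ n, f (n + 1) =
    X * (f n + 2 * ∑ i ∈ range ((n + 1).factorization 2 + 1), f (n + 2 ^ i))

theorem SatisfiesTiltingRec.unique {R : Type*} [CommSemiring R] {f g : ℕ → R⟦X⟧}
    (hf : SatisfiesTiltingRec f) (hg : SatisfiesTiltingRec g) : f = g := by
  suffices h : ∀ k n, coeff k (f n) = coeff k (g n) from funext fun n => ext fun k => h k n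
  intro k
  induction k with
  | zero => rintro (_ | n) <;> simp [hf.1, hg.1, hf.2, hg.2]
  | succ k ih =>
    rintro (_ | n)
    · rw [hf.1, hg.1]
    · rw [hf.2, hg.2, coeff_succ_X_mul, coeff_succ_X_mul, ← map_ofNat C 2]
      simp only [map_add, coeff_C_mul, map_sum, ih]

theorem satisfiesTiltingRec_xfun :
    SatisfiesTiltingRec fun n => PowerSeries.mk fun k => (xfun n k : ℤ) := by
  refine ⟨ext fun k => ?_, fun n => ext fun k => ?_⟩
  · cases k <;> simp [xfun, coeff_one]
  · cases k with
    | zero => simp [xfun]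
    | succ k =>
      rw [coeff_succ_X_mul, ← map_ofNat C 2]
      simp only [map_add, coeff_C_mul, map_sum, coeff_mk, xfun]
      push_cast
      rfl

theorem G_eval_zero (s : ℕ) : (G s).eval 0 = 1 := by
  induction s with
  | zero => simp [G]
  | succ s ih => simp [G, ih]

theorem prod_range_G (r : ℕ) :
    ∏ j ∈ range r, G j =
      G r + 2 * ∑ i ∈ range (r + 1), Polynomial.X ^ 2 ^ i * ∏ j ∈ Ico i r, G j := by
  induction r with
  | zero => simp [G]
  | succ r ih =>
    have hsum : ∑ i ∈ range (r + 1), Polynomial.X ^ 2 ^ i * ∏ j ∈ Ico i (r + 1), G j =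
        (∑ i ∈ range (r + 1), Polynomial.X ^ 2 ^ i * ∏ j ∈ Ico i r, G j) * G r := by
      rw [sum_mul]
      refine sum_congr rfl fun i hi => ?_
      rw [prod_Ico_succ_top (by simpa [Nat.lt_succ_iff] using hi), mul_assoc]
    rw [prod_range_succ, ih, sum_range_succ _ (r + 1), hsum, Ico_self, prod_empty, G]
    ring

theorem coe_prod_range_G (r : ℕ) :
    ((∏ j ∈ range r, G j : Polynomial ℤ) : ℤ⟦X⟧) =
      G r + 2 * ∑ i ∈ range (r + 1), X ^ 2 ^ i * ((∏ j ∈ Ico i r, G j : Polynomial ℤ) : ℤ⟦X⟧) := by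
  simpa only [map_add, map_mul, map_sum, map_pow, map_ofNat,
    Polynomial.coeToPowerSeries.ringHom_apply, Polynomial.coe_X]
    using congrArg Polynomial.coeToPowerSeries.ringHom (prod_range_G r)

theorem Nat.factorization_pow_mul_of_not_dvd {p m : ℕ} (hp : p.Prime) (r : ℕ) (hm : ¬p ∣ m) :
    (p ^ r * m).factorization p = r := by
  rw [Nat.factorization_mul (pow_ne_zero r hp.ne_zero) (by rintro rfl; exact hm (dvd_zero p)),
    Finsupp.add_apply, Nat.factorization_pow_self hp, Nat.factorization_eq_zero_of_not_dvd hm,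
    add_zero]

theorem Nat.bitIndices_add_two_pow_mul {a k : ℕ} (ha : a < 2 ^ k) (q : ℕ) :
    (a + 2 ^ k * q).bitIndices = a.bitIndices ++ (2 ^ k * q).bitIndices := by
  have hsorted : (a.bitIndices ++ (2 ^ k * q).bitIndices).SortedLT := by
    rw [List.sortedLT_iff_pairwise, List.pairwise_append]
    refine ⟨Nat.bitIndices_sorted.pairwise, Nat.bitIndices_sorted.pairwise, fun i hi j hj => ?_⟩
    have hik : i < k := (Nat.pow_lt_pow_iff_right one_lt_two).mp
      ((Nat.two_pow_le_of_mem_bitIndices hi).trans_lt ha)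
    rw [Nat.bitIndices_two_pow_mul, List.mem_map] at hj
    obtain ⟨j, -, rfl⟩ := hj
    omega
  conv_rhs => rw [← Nat.bitIndices_sum_map_two_pow hsorted]
  rw [List.map_append, List.sum_append, Nat.sum_map_two_pow_bitIndices,
    Nat.sum_map_two_pow_bitIndices]

noncomputable def digitProd (n : ℕ) : Polynomial ℤ := (n.bitIndices.map G).prod

theorem digitProd_add_two_pow_mul {a k : ℕ} (ha : a < 2 ^ k) (q : ℕ) :
    digitProd (a + 2 ^ k * q) = digitProd a * digitProd (2 ^ k * q) := by
  simp [digitProd, Nat.bitIndices_add_two_pow_mul ha]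

theorem digitProd_two_pow (r : ℕ) : digitProd (2 ^ r) = G r := by
  simp [digitProd]

theorem digitProd_two_pow_sub_one (r : ℕ) : digitProd (2 ^ r - 1) = ∏ j ∈ range r, G j := by
  induction r with
  | zero => simp [digitProd]
  | succ r ih =>
    have h : 2 ^ (r + 1) - 1 = (2 ^ r - 1) + 2 ^ r * 1 := by rw [pow_succ]; omega
    rw [h, digitProd_add_two_pow_mul (Nat.sub_lt (Nat.two_pow_pos r) one_pos), mul_one, ih,
      digitProd_two_pow, prod_range_succ]

theorem digitProd_mul_G_of_succ_eq {n r q i : ℕ} (hn : n + 1 = 2 ^ r + 2 ^ (r + 1) * q)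
    (hi : i ≤ r) :
    digitProd n * G r = digitProd (n + 2 ^ i) * ∏ j ∈ Ico i r, G j := by
  have hr : 2 ^ r = 2 ^ i * 2 ^ (r - i) := by rw [← pow_add, Nat.add_sub_cancel' hi]
  have hr' : 2 ^ (r + 1) = 2 * 2 ^ r := pow_succ' 2 r
  have hi₁ := Nat.one_le_two_pow (n := i)
  have hir : 2 ^ i ≤ 2 ^ r := Nat.pow_le_pow_right two_pos hi
  have hlt : (2 ^ i - 1) + 2 ^ i * 2 ^ (r - i) < 2 ^ (r + 1) := by rw [← hr]; omega
  rw [show n + 2 ^ i = ((2 ^ i - 1) + 2 ^ i * 2 ^ (r - i)) + 2 ^ (r + 1) * q by rw [← hr]; omega,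
    show n = (2 ^ r - 1) + 2 ^ (r + 1) * q by omega,
    digitProd_add_two_pow_mul (by omega), digitProd_add_two_pow_mul hlt,
    digitProd_add_two_pow_mul (Nat.sub_lt (Nat.two_pow_pos i) one_pos), ← hr,
    digitProd_two_pow_sub_one, digitProd_two_pow_sub_one, digitProd_two_pow,
    ← prod_range_mul_prod_Ico G hi]
  ring

theorem isUnit_coe_digitProd (n : ℕ) : IsUnit (digitProd n : ℤ⟦X⟧) := by
  rw [isUnit_iff_constantCoeff, Polynomial.constantCoeff_coe, Polynomial.coeff_zero_eq_eval_zero]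
  simp [digitProd, Polynomial.eval_list_prod, Function.comp_def, G_eval_zero]

noncomputable def closedForm (n : ℕ) : ℤ⟦X⟧ :=
  (X ^ n : ℤ⟦X⟧) * ((isUnit_coe_digitProd n).unit⁻¹ : ℤ⟦X⟧ˣ)

theorem closedForm_mul (n : ℕ) (c : Polynomial ℤ) :
    closedForm n * ((digitProd n * c : Polynomial ℤ) : ℤ⟦X⟧) = X ^ n * (c : ℤ⟦X⟧) := by
  rw [Polynomial.coe_mul, closedForm, mul_assoc, ← mul_assoc _ _ (c : ℤ⟦X⟧),
    IsUnit.val_inv_mul, one_mul]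

theorem satisfiesTiltingRec_closedForm : SatisfiesTiltingRec closedForm := by
  refine ⟨by simpa [digitProd] using closedForm_mul 0 1, fun n => ?_⟩
  obtain ⟨r, m, ⟨q, rfl⟩, hn⟩ := Nat.exists_eq_two_pow_mul_odd (Nat.add_one_ne_zero n)
  rw [hn, Nat.factorization_pow_mul_of_not_dvd Nat.prime_two r (by omega), ← hn]
  replace hn : n + 1 = 2 ^ r + 2 ^ (r + 1) * q := by rw [hn]; ring
  have hU : IsUnit ((digitProd n * G r : Polynomial ℤ) : ℤ⟦X⟧) := by
    rw [Polynomial.coe_mul, ← digitProd_two_pow]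
    exact (isUnit_coe_digitProd n).mul (isUnit_coe_digitProd _)
  have hsum : ∀ i ∈ range (r + 1),
      closedForm (n + 2 ^ i) * ((digitProd n * G r : Polynomial ℤ) : ℤ⟦X⟧) =
        X ^ (n + 2 ^ i) * ((∏ j ∈ Ico i r, G j : Polynomial ℤ) : ℤ⟦X⟧) := fun i hi => by
    rw [digitProd_mul_G_of_succ_eq hn (Nat.lt_succ_iff.mp (mem_range.mp hi)),
      closedForm_mul]
  -- the `i = 0` case also clears the denominator of `closedForm (n + 1)`
  have hsucc := hsum 0 (by simp)
  rw [pow_zero, ← range_eq_Ico] at hsucc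
  rw [← hU.mul_left_inj, mul_assoc X, add_mul, mul_assoc 2, sum_mul, sum_congr rfl hsum,
    closedForm_mul, hsucc, coe_prod_range_G]
  simp only [pow_add, mul_assoc, ← mul_sum]
  ring

theorem generating_function_eq (s : ℕ) :
    PowerSeries.mk (fun k => (xfun (2 ^ s) k : ℤ)) * (G s : PowerSeries ℤ) =
      PowerSeries.X ^ 2 ^ s := by
  have h := congrFun (satisfiesTiltingRec_xfun.unique satisfiesTiltingRec_closedForm) (2 ^ s)
  rw [h, ← digitProd_two_pow, ← mul_one (digitProd (2 ^ s)), closedForm_mul, Polynomial.coe_one,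
    mul_one]
end

section
/- For s ≥ 0 let P_s(X) = ∏_{i=1}^{2^s} (X − (2 + 2·cos((2i−1)π/2^{s+1}))), a monic real polynomial of degree 2^s. Then for every integer j with 1 ≤ j ≤ 2^s, P_s'(2 + 2·cos((2j−1)π/2^{s+1})) = (−1)^{j+1}·2^s / sin((2j−1)π/2^{s+1}), where P_s' is the derivative of P_s. -/
/-! The zeros of `cos (2 ^ s * θ)` on `(0, π)` are the angles `(2i+1)π/2^(s+1)`, so the factorisation
of the Chebyshev polynomial `T_{2^s}` over its roots gives `P_s (2 + 2 cos θ) = 2 cos (2 ^ s * θ)`.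
Differentiating in `θ` yields `P_s' (2 + 2 cos t) * sin t = 2 ^ s * sin (2 ^ s * t)`, and at
`t = (2j-1)π/2^(s+1)` the right-hand side is `(-1) ^ (j + 1) * 2 ^ s` while `sin t > 0`. -/

open Real

open Polynomial Polynomial.Chebyshev in
theorem Polynomial.Chebyshev.T_real_eq_C_mul_prod_X_sub_C_cos (n : ℕ) :
    T ℝ n = Polynomial.C (2 ^ (n - 1)) *
      ∏ k ∈ Finset.range n, (X - Polynomial.C (cos ((2 * k + 1) * π / (2 * n)))) := by
  have hroots : Multiset.card (T ℝ n).roots = (T ℝ n).natDegree := by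
    rw [roots_T_real, Finset.card_val, Finset.card_image_of_injOn, Finset.card_range,
      natDegree_T, Int.natAbs_natCast]
    exact (Finset.range n).nodup_map_iff_injOn.mp (roots_T_real_nodup n)
  conv_lhs => rw [← C_leadingCoeff_mul_prod_multiset_X_sub_C hroots]
  rw [leadingCoeff_T, Int.natAbs_natCast, roots_T_real, Finset.image_val, Finset.range_val,
    Multiset.dedup_eq_self.mpr (roots_T_real_nodup n), Multiset.map_map]
  rfl

open Polynomial.Chebyshev in
theorem prod_two_mul_cos_sub_two_mul_cos {n : ℕ} (hn : n ≠ 0) (θ : ℝ) :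
    ∏ k ∈ Finset.range n, (2 * cos θ - 2 * cos ((2 * k + 1) * π / (2 * n))) =
      2 * cos (n * θ) := by
  have hT := congrArg (Polynomial.eval (cos θ)) (T_real_eq_C_mul_prod_X_sub_C_cos n)
  simp only [T_real_cos, Polynomial.eval_mul, Polynomial.eval_C, Polynomial.eval_prod,
    Polynomial.eval_sub, Polynomial.eval_X, Int.cast_natCast] at hT
  simp only [← mul_sub, Finset.prod_mul_distrib, Finset.prod_const, Finset.card_range]
  rw [hT, ← mul_pow_sub_one hn, mul_assoc]

theorem eval_derivative_mul_sin_of_eval_two_add_two_mul_cos {p : Polynomial ℝ} {n : ℝ}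
    (h : ∀ θ, p.eval (2 + 2 * cos θ) = 2 * cos (n * θ)) (t : ℝ) :
    p.derivative.eval (2 + 2 * cos t) * sin t = n * sin (n * t) := by
  have hl : HasDerivAt (fun θ => p.eval (2 + 2 * cos θ))
      (p.derivative.eval (2 + 2 * cos t) * (2 * -sin t)) t :=
    (p.hasDerivAt _).comp t (((hasDerivAt_cos t).const_mul 2).const_add 2)
  have hr : HasDerivAt (fun θ => 2 * cos (n * θ)) (2 * (-sin (n * t) * n)) t :=
    ((hasDerivAt_cos _).comp t (hasDerivAt_const_mul n)).const_mul 2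
  have := (funext h ▸ hl).unique hr
  linarith

theorem sin_mul_odd_mul_pi_div {n : ℕ} (hn : n ≠ 0) (j : ℕ) :
    sin (n * ((2 * j - 1) * π / (2 * n))) = (-1) ^ (j + 1) := by
  have : (n : ℝ) * ((2 * j - 1) * π / (2 * n)) = j * π - π / 2 := by
    field_simp
  rw [this, sin_nat_mul_pi_sub, sin_pi_div_two, pow_succ]
  ring

theorem sin_odd_mul_pi_div_pos {n j : ℕ} (hj1 : 1 ≤ j) (hj2 : j ≤ n) :
    0 < sin ((2 * j - 1) * π / (2 * n)) := by
  have hj1' : (1 : ℝ) ≤ j := by exact_mod_cast hj1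
  have hj2' : (j : ℝ) ≤ n := by exact_mod_cast hj2
  apply sin_pos_of_pos_of_lt_pi
  · have : 0 < 2 * (j : ℝ) - 1 := by linarith
    have : (0 : ℝ) < n := by linarith
    positivity
  · rw [div_lt_iff₀ (by linarith), mul_comm π]
    exact mul_lt_mul_of_pos_right (by linarith) pi_pos

theorem derivative_of_Ps (s : ℕ)
    (P : Polynomial ℝ)
    (hP : P = ∏ i ∈ Finset.range (2 ^ s),
        (Polynomial.X - Polynomial.C (2 + 2 * Real.cos ((2 * (i : ℝ) + 1) * π / 2 ^ (s + 1)))))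
    (j : ℕ) (hj1 : 1 ≤ j) (hj2 : j ≤ 2 ^ s) :
    P.derivative.eval (2 + 2 * Real.cos ((2 * (j : ℝ) - 1) * π / 2 ^ (s + 1))) =
      (-1) ^ (j + 1) * 2 ^ s / Real.sin ((2 * (j : ℝ) - 1) * π / 2 ^ (s + 1)) := by
  have hn : 2 ^ s ≠ 0 := by positivity
  have h2n : (2 : ℝ) ^ (s + 1) = 2 * ((2 ^ s : ℕ) : ℝ) := by push_cast; ring
  have hP_cos : ∀ θ, P.eval (2 + 2 * cos θ) = 2 * cos (((2 ^ s : ℕ) : ℝ) * θ) := fun θ => by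
    simp only [hP, h2n, Polynomial.eval_prod, Polynomial.eval_sub, Polynomial.eval_X,
      Polynomial.eval_C, add_sub_add_left_eq_sub]
    exact prod_two_mul_cos_sub_two_mul_cos hn θ
  have hderiv := eval_derivative_mul_sin_of_eval_two_add_two_mul_cos hP_cos
    ((2 * j - 1) * π / (2 * ((2 ^ s : ℕ) : ℝ)))
  have hsin := sin_odd_mul_pi_div_pos hj1 hj2
  rw [sin_mul_odd_mul_pi_div hn] at hderiv
  rw [h2n, eq_div_iff hsin.ne', hderiv]
  push_cast
  ring
end

section
/- Let r ≥ 1 and let A_1, …, A_r : ℤ → [0,∞) be summable functions supported on ℕ with ‖A_i‖₁ = 1/2 for each i. Let a_1, …, a_r be non-negative integers and let a be an integer with a ≥ a_1 + ⋯ + a_r. Then sup_{x ≥ a} (A_1∗⋯∗A_r)(x) ≤ 2^{1−r}·∑_{i=1}^r sup_{x ≥ a_i} A_i(x). -/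
/-
Let `M_A ≥ A` on `[c, ∞)`, `M_B ≥ B` on `[d, ∞)` and `x ≥ c + d`. Every term of `(A ∗ B)(x)`
satisfies `A p B(x - p) ≤ A p M_B + M_A B(x - p)`: for `p ≥ c` bound `A p`, otherwise
`x - p ≥ d` and bound `B(x - p)`. Summing, `(A ∗ B)(x) ≤ ‖A‖₁ M_B + M_A ‖B‖₁`.
Applied to `A 0 ∗ (A 1 ∗ ⋯ ∗ A m)`, whose inner factor has mass `σ^m` when every `A i` has
mass `σ`, induction gives `(A 0 ∗ ⋯ ∗ A m)(x) ≤ σ^m ∑ M_i`; take `σ = 1/2`.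
-/

/-- Discrete convolution of functions on `ℤ`. -/
noncomputable def zconv (A B : ℤ → ℝ) : ℤ → ℝ := fun n => ∑' p : ℤ, A p * B (n - p)

/-- Iterated discrete convolution `A 0 ∗ A 1 ∗ ⋯ ∗ A m`. -/
noncomputable def iConv : (m : ℕ) → (Fin (m + 1) → ℤ → ℝ) → ℤ → ℝ
  | 0, A => A 0
  | m + 1, A => zconv (A 0) (iConv m (fun i => A i.succ))

section zconv

variable {A B : ℤ → ℝ}

def convEquiv : ℤ × ℤ ≃ ℤ × ℤ where
  toFun q := (q.2, q.1 - q.2)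
  invFun q := (q.1 + q.2, q.1)
  left_inv q := by simp
  right_inv q := by simp

lemma summable_zconv_uncurry (hA0 : ∀ k, 0 ≤ A k) (hB0 : ∀ k, 0 ≤ B k)
    (hA : Summable A) (hB : Summable B) :
    Summable fun q : ℤ × ℤ => A q.2 * B (q.1 - q.2) :=
  convEquiv.summable_iff.mpr (hA.mul_of_nonneg hB hA0 hB0)

lemma zconv_nonneg (hA0 : ∀ k, 0 ≤ A k) (hB0 : ∀ k, 0 ≤ B k) (n : ℤ) : 0 ≤ zconv A B n :=
  tsum_nonneg fun p => mul_nonneg (hA0 p) (hB0 _)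

lemma summable_zconv (hA0 : ∀ k, 0 ≤ A k) (hB0 : ∀ k, 0 ≤ B k)
    (hA : Summable A) (hB : Summable B) : Summable (zconv A B) :=
  (summable_zconv_uncurry hA0 hB0 hA hB).prod

lemma tsum_zconv (hA0 : ∀ k, 0 ≤ A k) (hB0 : ∀ k, 0 ≤ B k)
    (hA : Summable A) (hB : Summable B) :
    ∑' n, zconv A B n = (∑' k, A k) * ∑' k, B k := by
  rw [hA.tsum_mul_tsum hB (hA.mul_of_nonneg hB hA0 hB0),
    ← convEquiv.tsum_eq fun q => A q.1 * B q.2]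
  exact (summable_zconv_uncurry hA0 hB0 hA hB).tsum_prod.symm

lemma zconv_le_of_tail (hA0 : ∀ k, 0 ≤ A k) (hB0 : ∀ k, 0 ≤ B k)
    (hA : Summable A) (hB : Summable B) {c d x : ℤ} (hx : c + d ≤ x) {MA MB : ℝ}
    (hMA : ∀ y, c ≤ y → A y ≤ MA) (hMB : ∀ y, d ≤ y → B y ≤ MB) :
    zconv A B x ≤ (∑' k, A k) * MB + MA * ∑' k, B k := by
  have hB' : Summable fun p => B (x - p) := (Equiv.subLeft x).summable_iff.mpr hB
  have hMA0 : 0 ≤ MA := (hA0 c).trans (hMA c le_rfl)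
  have hMB0 : 0 ≤ MB := (hB0 d).trans (hMB d le_rfl)
  have hterm (p : ℤ) : A p * B (x - p) ≤ A p * MB + MA * B (x - p) := by
    rcases lt_or_ge p c with hp | hp
    · have := mul_le_mul_of_nonneg_left (hMB (x - p) (by omega)) (hA0 p)
      nlinarith [mul_nonneg hMA0 (hB0 (x - p))]
    · have := mul_le_mul_of_nonneg_right (hMA _ hp) (hB0 (x - p))
      nlinarith [mul_nonneg (hA0 p) hMB0]
  calc zconv A B x ≤ ∑' p, (A p * MB + MA * B (x - p)) :=
        ((summable_zconv_uncurry hA0 hB0 hA hB).prod_factor x).tsum_le_tsum hterm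
          ((hA.mul_right MB).add (hB'.mul_left MA))
    _ = (∑' k, A k) * MB + MA * ∑' k, B k := by
        rw [(hA.mul_right MB).tsum_add (hB'.mul_left MA), tsum_mul_right, tsum_mul_left,
          show ∑' p, B (x - p) = ∑' k, B k from (Equiv.subLeft x).tsum_eq B]

end zconv

section iConv

lemma iConv_succ (m : ℕ) (A : Fin (m + 2) → ℤ → ℝ) :
    iConv (m + 1) A = zconv (A 0) (iConv m fun i => A i.succ) :=
  rfl

lemma iConv_nonneg_and_summable (m : ℕ) (A : Fin (m + 1) → ℤ → ℝ) (hA0 : ∀ i k, 0 ≤ A i k)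
    (hA : ∀ i, Summable (A i)) : (∀ k, 0 ≤ iConv m A k) ∧ Summable (iConv m A) := by
  induction m with
  | zero => exact ⟨hA0 0, hA 0⟩
  | succ m ih =>
    obtain ⟨hB0, hB⟩ := ih (fun i => A i.succ) (fun i => hA0 i.succ) (fun i => hA i.succ)
    exact ⟨zconv_nonneg (hA0 0) hB0, summable_zconv (hA0 0) hB0 (hA 0) hB⟩

lemma tsum_iConv (m : ℕ) (A : Fin (m + 1) → ℤ → ℝ) (hA0 : ∀ i k, 0 ≤ A i k)
    (hA : ∀ i, Summable (A i)) : ∑' k, iConv m A k = ∏ i, ∑' k, A i k := by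
  induction m with
  | zero => simp [iConv]
  | succ m ih =>
    obtain ⟨hB0, hB⟩ :=
      iConv_nonneg_and_summable m _ (fun i => hA0 i.succ) (fun i => hA i.succ)
    rw [iConv_succ, tsum_zconv (hA0 0) hB0 (hA 0) hB,
      ih _ (fun i => hA0 i.succ) (fun i => hA i.succ)]
    exact (Fin.prod_univ_succ fun i => ∑' k, A i k).symm

theorem iConv_le_of_tail (m : ℕ) (A : Fin (m + 1) → ℤ → ℝ) (hA0 : ∀ i k, 0 ≤ A i k)
    (hA : ∀ i, Summable (A i)) {σ : ℝ} (hσ : ∀ i, ∑' k, A i k = σ)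
    (a : Fin (m + 1) → ℤ) (M : Fin (m + 1) → ℝ) (hM : ∀ i y, a i ≤ y → A i y ≤ M i)
    {x : ℤ} (hx : ∑ i, a i ≤ x) :
    iConv m A x ≤ σ ^ m * ∑ i, M i := by
  induction m generalizing x with
  | zero => simpa [iConv] using hM 0 x (by simpa using hx)
  | succ m ih =>
    obtain ⟨hB0, hB⟩ :=
      iConv_nonneg_and_summable m _ (fun i => hA0 i.succ) (fun i => hA i.succ)
    have hmass : ∑' k, iConv m (fun i => A i.succ) k = σ ^ (m + 1) := by
      simp [tsum_iConv m _ (fun i => hA0 i.succ) (fun i => hA i.succ), hσ]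
    have hx' : a 0 + ∑ i : Fin (m + 1), a i.succ ≤ x := by rwa [← Fin.sum_univ_succ]
    calc iConv (m + 1) A x
        ≤ σ * (σ ^ m * ∑ i : Fin (m + 1), M i.succ) + M 0 * σ ^ (m + 1) := by
          have := zconv_le_of_tail (hA0 0) hB0 (hA 0) hB hx' (hM 0)
            fun y hy => ih _ (fun i => hA0 i.succ) (fun i => hA i.succ) (fun i => hσ i.succ)
              _ _ (fun i => hM i.succ) hy
          rwa [hσ 0, hmass] at this
      _ = σ ^ (m + 1) * ∑ i, M i := by rw [Fin.sum_univ_succ M]; ring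

end iConv

lemma Summable.le_iSup_Ici {α : Type*} [Preorder α] {f : α → ℝ} (hf : Summable f) {a y : α}
    (hy : a ≤ y) : f y ≤ ⨆ z : Set.Ici a, f z :=
  le_ciSup (f := fun z : Set.Ici a => f z)
    (hf.tendsto_cofinite_zero.bddAbove_range_of_cofinite.mono
      (Set.range_comp_subset_range Subtype.val f)) ⟨y, hy⟩

theorem conv_tail_bound_general (m : ℕ) (A : Fin (m + 1) → ℤ → ℝ)
    (hnonneg : ∀ i k, 0 ≤ A i k)
    (hsum : ∀ i, Summable (A i))
    (hone : ∀ i, ∑' k : ℤ, A i k = 1 / 2)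
    (a : Fin (m + 1) → ℤ)
    (a₀ : ℤ) (ha₀ : ∑ i, a i ≤ a₀) :
    ∀ x : ℤ, a₀ ≤ x →
      iConv m A x ≤
        (2 : ℝ) ^ (1 - ((m : ℤ) + 1)) * ∑ i, ⨆ y : Set.Ici (a i), A i y := by
  intro x hx
  have hpow : (2 : ℝ) ^ (1 - ((m : ℤ) + 1)) = (1 / 2) ^ m := by
    rw [show 1 - ((m : ℤ) + 1) = -m by ring, zpow_neg, zpow_natCast, one_div, inv_pow]
  rw [hpow]
  exact iConv_le_of_tail m A hnonneg hsum hone a _ (fun i _ hy => (hsum i).le_iSup_Ici hy)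
    (ha₀.trans hx)

theorem conv_tail_bound (m : ℕ) (A : Fin (m + 1) → ℤ → ℝ)
    (hnonneg : ∀ i k, 0 ≤ A i k)
    (hsupp : ∀ i, ∀ k < 0, A i k = 0)
    (hsum : ∀ i, Summable (A i))
    (hone : ∀ i, ∑' k : ℤ, A i k = 1 / 2)
    (a : Fin (m + 1) → ℤ) (ha : ∀ i, 0 ≤ a i)
    (a₀ : ℤ) (ha₀ : ∑ i, a i ≤ a₀) :
    ∀ x : ℤ, a₀ ≤ x →
      iConv m A x ≤
        (2 : ℝ) ^ (1 - ((m : ℤ) + 1)) * ∑ i, ⨆ y : Set.Ici (a i), A i y :=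
  conv_tail_bound_general m A hnonneg hsum hone a a₀ ha₀
end

section
/- Let A, B : ℤ → [0,∞) be supported on ℕ, with A summable and B bounded, and let a, b be non-negative integers. Then sup_{x ≥ a+b} |(A∗B)(x) − ‖A‖₁·B(x)| ≤ ‖A‖₁·sup_{0 ≤ d ≤ a} sup_{x ≥ b} |B(x+d) − B(x)| + 2·(∑_{i ≥ a} A(i))·sup_{x∈ℤ} B(x). -/
theorem abs_tsum_le_aux {f : ℤ → ℝ} (h : Summable fun i => |f i|) :
    |∑' i, f i| ≤ ∑' i, |f i| := by
  have h' : Summable fun i => ‖f i‖ := by simpa [Real.norm_eq_abs] using h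
  simpa [Real.norm_eq_abs] using norm_tsum_le_tsum_norm h'

set_option maxHeartbeats 800000 in
theorem conv_summing_by_parts (A B : ℤ → ℝ)
    (hA0 : ∀ k, 0 ≤ A k) (hB0 : ∀ k, 0 ≤ B k)
    (hAsupp : ∀ k < 0, A k = 0) (hBsupp : ∀ k < 0, B k = 0)
    (hAsum : Summable A) (hBbdd : BddAbove (Set.range B))
    (a b : ℤ) (ha : 0 ≤ a) (hb : 0 ≤ b) :
    ∀ x : ℤ, a + b ≤ x →
      |zconv A B x - (∑' k : ℤ, A k) * B x| ≤
        (∑' k : ℤ, A k) *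
            (⨆ d : Set.Icc (0 : ℤ) a, ⨆ y : Set.Ici b, |B (y + d) - B y|) +
          2 * (∑' i : Set.Ici a, A i) * ⨆ k : ℤ, B k := by
  intro x hx
  set M : ℝ := ⨆ k : ℤ, B k with hMdef
  have hBM : ∀ k, B k ≤ M := fun k => le_ciSup hBbdd k
  have hM0 : (0:ℝ) ≤ M := le_trans (hB0 0) (hBM 0)
  have habs : ∀ u v : ℤ, |B u - B v| ≤ M := by
    intro u v
    rw [abs_sub_le_iff]
    constructor <;> linarith [hBM u, hBM v, hB0 u, hB0 v]
  haveI hne1 : Nonempty (Set.Icc (0:ℤ) a) := ⟨⟨0, by simp [ha]⟩⟩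
  haveI hne2 : Nonempty (Set.Ici b) := ⟨⟨b, le_refl b⟩⟩
  set S : ℝ := ⨆ d : Set.Icc (0:ℤ) a, ⨆ y : Set.Ici b, |B (y + d) - B y| with hSdef
  have hinner_bdd : ∀ d : Set.Icc (0:ℤ) a,
      BddAbove (Set.range fun y : Set.Ici b => |B (y + d) - B y|) := by
    intro d
    exact ⟨M, by rintro _ ⟨y, rfl⟩; exact habs _ _⟩
  have houter_bdd : BddAbove (Set.range fun d : Set.Icc (0:ℤ) a =>
      ⨆ y : Set.Ici b, |B (y + d) - B y|) := by
    refine ⟨M, ?_⟩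
    rintro _ ⟨d, rfl⟩
    exact ciSup_le fun y => habs _ _
  have hS_ge : ∀ p : ℤ, 0 ≤ p → p ≤ a → ∀ y : ℤ, b ≤ y → |B (y + p) - B y| ≤ S := by
    intro p hp0 hpa y hy
    calc |B (y + p) - B y| ≤ ⨆ z : Set.Ici b, |B (z + p) - B z| :=
          le_ciSup (hinner_bdd ⟨p, hp0, hpa⟩) (⟨y, hy⟩ : Set.Ici b)
      _ ≤ S := le_ciSup houter_bdd (⟨p, hp0, hpa⟩ : Set.Icc (0:ℤ) a)
  have hS0 : (0:ℝ) ≤ S :=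
    le_trans (abs_nonneg _) (hS_ge 0 le_rfl ha b le_rfl)
  -- summability facts
  have h1 : Summable (fun p : ℤ => A p * B (x - p)) := by
    refine Summable.of_nonneg_of_le (fun p => mul_nonneg (hA0 p) (hB0 _))
      (fun p => mul_le_mul_of_nonneg_left (hBM _) (hA0 p)) (hAsum.mul_right M)
  have h2 : Summable (fun p : ℤ => A p * B x) := hAsum.mul_right _
  have hdiff : zconv A B x - (∑' k : ℤ, A k) * B x
      = ∑' p : ℤ, A p * (B (x - p) - B x) := by
    have : (∑' k : ℤ, A k) * B x = ∑' p : ℤ, A p * B x := (tsum_mul_right).symm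
    rw [zconv, this, ← Summable.tsum_sub h1 h2]
    simp [mul_sub]
  have habsf : Summable (fun p : ℤ => |A p * (B (x - p) - B x)|) := by
    refine Summable.of_nonneg_of_le (fun p => abs_nonneg _) (fun p => ?_)
      (hAsum.mul_right M)
    rw [abs_mul, abs_of_nonneg (hA0 p)]
    exact mul_le_mul_of_nonneg_left (habs _ _) (hA0 p)
  set g : ℤ → ℝ := fun p => A p * S + (Set.Ici a).indicator A p * (2 * M) with hgdef
  have hgsum1 : Summable (fun p : ℤ => A p * S) := hAsum.mul_right _
  have hindsum : Summable ((Set.Ici a).indicator A) := hAsum.indicator _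
  have hgsum2 : Summable (fun p : ℤ => (Set.Ici a).indicator A p * (2 * M)) :=
    hindsum.mul_right _
  have hgsum : Summable g := hgsum1.add hgsum2
  have hle : ∀ p : ℤ, |A p * (B (x - p) - B x)| ≤ g p := by
    intro p
    have hind0 : 0 ≤ (Set.Ici a).indicator A p * (2 * M) := by
      refine mul_nonneg ?_ (by linarith)
      exact Set.indicator_nonneg (fun k _ => hA0 k) p
    rw [abs_mul, abs_of_nonneg (hA0 p)]
    by_cases hpa : p ≤ a
    · by_cases hp0 : 0 ≤ p
      · have hxb : b ≤ x - p := by linarith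
        have := hS_ge p hp0 hpa (x - p) hxb
        rw [sub_add_cancel, abs_sub_comm] at this
        have h5 : A p * |B (x - p) - B x| ≤ A p * S :=
          mul_le_mul_of_nonneg_left this (hA0 p)
        simp only [hgdef]
        linarith
      · have hAp : A p = 0 := hAsupp p (by linarith)
        simp only [hgdef, hAp, zero_mul, zero_add]
        exact hind0
    · have hpi : p ∈ Set.Ici a := le_of_lt (lt_of_not_ge hpa)
      have h5 : A p * |B (x - p) - B x| ≤ A p * (2 * M) :=
        mul_le_mul_of_nonneg_left (le_trans (habs _ _) (by linarith)) (hA0 p)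
      have h6 : 0 ≤ A p * S := mul_nonneg (hA0 p) hS0
      simp only [hgdef, Set.indicator_of_mem hpi]
      linarith
  have htsumg : ∑' p : ℤ, g p
      = (∑' k : ℤ, A k) * S + (∑' i : Set.Ici a, A i) * (2 * M) := by
    rw [Summable.tsum_add hgsum1 hgsum2, tsum_mul_right, tsum_mul_right,
      ← tsum_subtype (Set.Ici a) A]
  calc |zconv A B x - (∑' k : ℤ, A k) * B x|
      = |∑' p : ℤ, A p * (B (x - p) - B x)| := by rw [hdiff]
    _ ≤ ∑' p : ℤ, |A p * (B (x - p) - B x)| := abs_tsum_le_aux habsf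
    _ ≤ ∑' p : ℤ, g p := Summable.tsum_le_tsum hle habsf hgsum
    _ = (∑' k : ℤ, A k) * S + (∑' i : Set.Ici a, A i) * (2 * M) := htsumg
    _ = (∑' k : ℤ, A k) * S + 2 * (∑' i : Set.Ici a, A i) * M := by ring
end

section
/- Let r ≥ 1 and let σ_1, …, σ_r : ℝ → [0,∞) be Schwartz functions vanishing on (−∞,0), with ∫_ℝ σ_i = 1/2 for each i. Let a_1, …, a_r be non-negative real numbers and let a ≥ a_1 + ⋯ + a_r. Then sup_{x ≥ a} (σ_1∗⋯∗σ_r)(x) ≤ 2^{1−r}·∑_{i=1}^r sup_{x ≥ a_i} σ_i(x). -/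
/-!
Let `S i = sup_{y ≥ a i} σ i y` and let `G = σ 1 ∗ ⋯ ∗ σ m`, which by induction is at most
`B = 2⁻⁽ᵐ⁻¹⁾ ∑_{i ≥ 1} S i` on `[a 1 + ⋯ + a m, ∞)`. For `x ≥ a 0 + ⋯ + a m` and any `y`, either
`y ≥ a 0`, where `σ 0 y ≤ S 0`, or `x - y ≥ a 1 + ⋯ + a m`, where `G (x - y) ≤ B`; as everything is
nonnegative, in both cases `σ 0 y * G (x - y) ≤ S 0 * G (x - y) + B * σ 0 y`. Integrating in `y`,
with `∫ G = 2⁻ᵐ` and `∫ σ 0 = 1/2`, gives `(σ 0 ∗ G) x ≤ 2⁻ᵐ ∑ i, S i`.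
-/

open MeasureTheory

/-- Convolution of functions on `ℝ`. -/
noncomputable def rconv (f g : ℝ → ℝ) : ℝ → ℝ := fun x => ∫ y : ℝ, f y * g (x - y)

/-- Iterated convolution `f 0 ∗ f 1 ∗ ⋯ ∗ f m`. -/
noncomputable def iConvR : (m : ℕ) → (Fin (m + 1) → ℝ → ℝ) → ℝ → ℝ
  | 0, f => f 0
  | m + 1, f => rconv (f 0) (iConvR m (fun i => f i.succ))

section rconv

variable {f g : ℝ → ℝ}

lemma rconv_eq_convolution (f g : ℝ → ℝ) :
    rconv f g = convolution f g (ContinuousLinearMap.mul ℝ ℝ) volume :=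
  rfl

lemma MeasureTheory.Integrable.rconv (hf : Integrable f) (hg : Integrable g) :
    Integrable (rconv f g) := by
  rw [rconv_eq_convolution]
  exact hf.integrable_convolution _ hg

lemma integral_rconv (hf : Integrable f) (hg : Integrable g) :
    ∫ x, rconv f g x = (∫ x, f x) * ∫ x, g x := by
  rw [rconv_eq_convolution, integral_convolution _ hf hg]
  rfl

lemma rconv_nonneg (hf : 0 ≤ f) (hg : 0 ≤ g) : 0 ≤ rconv f g :=
  fun _ => integral_nonneg fun y => mul_nonneg (hf y) (hg _)

lemma rconv_le_of_tail_bounds (hf : 0 ≤ f) (hg : 0 ≤ g) (hfi : Integrable f)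
    (hgi : Integrable g) {a b S B x : ℝ} (hS : ∀ y, a ≤ y → f y ≤ S)
    (hB : ∀ z, b ≤ z → g z ≤ B) (hx : a + b ≤ x) :
    rconv f g x ≤ S * (∫ z, g z) + B * ∫ y, f y := by
  have hS0 : 0 ≤ S := (hf a).trans (hS a le_rfl)
  have hB0 : 0 ≤ B := (hg b).trans (hB b le_rfl)
  have hpointwise : ∀ y, f y * g (x - y) ≤ S * g (x - y) + B * f y := by
    intro y
    rcases le_or_gt a y with hy | hy
    · have := mul_le_mul_of_nonneg_right (hS y hy) (hg (x - y))
      nlinarith [mul_nonneg hB0 (hf y)]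
    · have := mul_le_mul_of_nonneg_left (hB (x - y) (by linarith)) (hf y)
      nlinarith [mul_nonneg hS0 (hg (x - y))]
  have hgx : Integrable fun y => g (x - y) := hgi.comp_sub_left x
  calc rconv f g x ≤ ∫ y, (S * g (x - y) + B * f y) :=
        integral_mono_of_nonneg (.of_forall fun y => mul_nonneg (hf y) (hg _))
          ((hgx.const_mul S).add (hfi.const_mul B)) (.of_forall hpointwise)
    _ = S * (∫ z, g z) + B * ∫ y, f y := by
        rw [integral_add (hgx.const_mul S) (hfi.const_mul B), integral_const_mul,
          integral_const_mul, integral_sub_left_eq_self g volume x]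

end rconv

section iConvR

lemma integrable_iConvR {m : ℕ} {f : Fin (m + 1) → ℝ → ℝ} (hf : ∀ i, Integrable (f i)) :
    Integrable (iConvR m f) := by
  induction m with
  | zero => exact hf 0
  | succ m ih => exact (hf 0).rconv (ih fun i => hf i.succ)

lemma integral_iConvR {m : ℕ} {f : Fin (m + 1) → ℝ → ℝ} (hf : ∀ i, Integrable (f i)) :
    ∫ x, iConvR m f x = ∏ i, ∫ x, f i x := by
  induction m with
  | zero => simp [iConvR]
  | succ m ih =>
    rw [iConvR, integral_rconv (hf 0) (integrable_iConvR fun i => hf i.succ),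
      ih fun i => hf i.succ, Fin.prod_univ_succ (f := fun i => ∫ x, f i x)]

lemma iConvR_nonneg {m : ℕ} {f : Fin (m + 1) → ℝ → ℝ} (hf : ∀ i, 0 ≤ f i) :
    0 ≤ iConvR m f := by
  induction m with
  | zero => exact hf 0
  | succ m ih => exact rconv_nonneg (hf 0) (ih fun i => hf i.succ)

lemma iConvR_le_of_tail_bounds {m : ℕ} {f : Fin (m + 1) → ℝ → ℝ} {c : ℝ}
    (hf : ∀ i, 0 ≤ f i) (hfi : ∀ i, Integrable (f i)) (hc : ∀ i, ∫ x, f i x = c)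
    {a S : Fin (m + 1) → ℝ} (hS : ∀ i y, a i ≤ y → f i y ≤ S i) {x : ℝ} (hx : ∑ i, a i ≤ x) :
    iConvR m f x ≤ c ^ m * ∑ i, S i := by
  induction m generalizing x with
  | zero => simpa [iConvR] using hS 0 x (by simpa using hx)
  | succ m ih =>
    have htail : ∀ z, ∑ i : Fin (m + 1), a i.succ ≤ z →
        iConvR m (fun i => f i.succ) z ≤ c ^ m * ∑ i : Fin (m + 1), S i.succ :=
      fun z hz => ih (fun i => hf i.succ) (fun i => hfi i.succ) (fun i => hc i.succ)
        (fun i => hS i.succ) hz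
    have hintegral : ∫ z, iConvR m (fun i => f i.succ) z = c ^ (m + 1) := by
      simp [integral_iConvR fun i => hfi i.succ, hc]
    calc iConvR (m + 1) f x
        ≤ S 0 * (∫ z, iConvR m (fun i => f i.succ) z)
          + c ^ m * (∑ i : Fin (m + 1), S i.succ) * ∫ y, f 0 y :=
          rconv_le_of_tail_bounds (hf 0) (iConvR_nonneg fun i => hf i.succ) (hfi 0)
            (integrable_iConvR fun i => hfi i.succ) (hS 0) htail (by rwa [← Fin.sum_univ_succ])
      _ = c ^ (m + 1) * ∑ i, S i := by
          rw [hintegral, hc 0, Fin.sum_univ_succ (f := S)]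
          ring

end iConvR

lemma SchwartzMap.le_iSup_Ici (f : SchwartzMap ℝ ℝ) {c y : ℝ} (hy : c ≤ y) :
    f y ≤ ⨆ z : Set.Ici c, f z :=
  le_ciSup (f := fun z : Set.Ici c => f z)
    ⟨SchwartzMap.seminorm ℝ 0 0 f, by
      rintro _ ⟨z, rfl⟩
      exact (le_abs_self _).trans (SchwartzMap.norm_le_seminorm ℝ f z)⟩
    ⟨y, hy⟩

theorem real_conv_tail_bound_general (m : ℕ) (σ : Fin (m + 1) → SchwartzMap ℝ ℝ)
    (hnonneg : ∀ i x, 0 ≤ σ i x)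
    (hone : ∀ i, ∫ x : ℝ, σ i x = 1 / 2)
    (a : Fin (m + 1) → ℝ)
    (a₀ : ℝ) (ha₀ : ∑ i, a i ≤ a₀) :
    ∀ x : ℝ, a₀ ≤ x →
      iConvR m (fun i => σ i) x ≤
        (2 : ℝ) ^ (1 - ((m : ℤ) + 1)) * ∑ i, ⨆ y : Set.Ici (a i), σ i y := by
  intro x hx
  have hpow : (2 : ℝ) ^ (1 - ((m : ℤ) + 1)) = (1 / 2) ^ m := by
    rw [show (1 : ℤ) - ((m : ℤ) + 1) = -(m : ℤ) by ring, zpow_neg, zpow_natCast, one_div,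
      inv_pow]
  rw [hpow]
  exact iConvR_le_of_tail_bounds hnonneg (fun i => (σ i).integrable) hone
    (fun i _ hy => (σ i).le_iSup_Ici hy) (ha₀.trans hx)

theorem real_conv_tail_bound (m : ℕ) (σ : Fin (m + 1) → SchwartzMap ℝ ℝ)
    (hnonneg : ∀ i x, 0 ≤ σ i x)
    (hsupp : ∀ i, ∀ x : ℝ, x < 0 → σ i x = 0)
    (hone : ∀ i, ∫ x : ℝ, σ i x = 1 / 2)
    (a : Fin (m + 1) → ℝ) (ha : ∀ i, 0 ≤ a i)
    (a₀ : ℝ) (ha₀ : ∑ i, a i ≤ a₀) :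
    ∀ x : ℝ, a₀ ≤ x →
      iConvR m (fun i => σ i) x ≤
        (2 : ℝ) ^ (1 - ((m : ℤ) + 1)) * ∑ i, ⨆ y : Set.Ici (a i), σ i y :=
  real_conv_tail_bound_general m σ hnonneg hone a a₀ ha₀
end

section
/- Let σ, τ : ℝ → [0,∞) be Schwartz functions vanishing on (−∞,0), and let a, b ≥ 0 be real numbers. Then sup_{x ≥ a+b} |(σ∗τ)(x) − (∫_ℝ σ)·τ(x)| ≤ a·(∫_ℝ σ)·sup_{y ≥ b} |τ'(y)| + 2·(∫_a^∞ σ(x) dx)·sup_{x∈ℝ} τ(x). -/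
open MeasureTheory

/-!
Write the difference as `∫ σ y * (τ (x - y) - τ x) dy` and split the integral at `y = a`.
Since `σ` vanishes on `(-∞, 0)`, only `0 ≤ y < a` matters on the left piece; there both `x - y`
and `x` lie in `[b, ∞)`, so the mean value theorem gives `|τ (x - y) - τ x| ≤ a · sup_{≥ b} |τ'|`.
On the right piece `|τ (x - y) - τ x| ≤ 2 sup τ`, as `0 ≤ τ ≤ sup τ`.
-/

open Set

lemma MeasureTheory.Integrable.mul_comp_const_sub {σ τ : ℝ → ℝ} (hσ : Integrable σ)
    (hτ : Continuous τ) {C : ℝ} (hC : ∀ y, |τ y| ≤ C) (x : ℝ) :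
    Integrable (fun y => σ y * τ (x - y)) :=
  hσ.mul_bdd (c := C) (hτ.comp (continuous_sub_left x)).aestronglyMeasurable
    (Filter.Eventually.of_forall fun y => hC (x - y))

lemma rconv_sub_integral_mul_eq {σ τ : ℝ → ℝ} (hσ : Integrable σ) (hτ : Continuous τ) {C : ℝ}
    (hC : ∀ y, |τ y| ≤ C) (x : ℝ) :
    rconv σ τ x - (∫ y, σ y) * τ x = ∫ y, σ y * (τ (x - y) - τ x) := by
  simp only [rconv, mul_sub]
  rw [integral_sub (hσ.mul_comp_const_sub hτ hC x) (hσ.mul_const _), integral_mul_const]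

lemma abs_sub_le_of_abs_deriv_le {τ : ℝ → ℝ} (hτ : Differentiable ℝ τ) {b S : ℝ}
    (hS : ∀ z, b ≤ z → |deriv τ z| ≤ S) {u v : ℝ} (hu : b ≤ u) (hv : b ≤ v) :
    |τ u - τ v| ≤ S * |u - v| :=
  (convex_Ici b).norm_image_sub_le_of_norm_deriv_le (fun z _ => hτ z) hS hv hu

lemma setIntegral_Iio_abs_mul_sub_le {σ τ : ℝ → ℝ} (hσ : Integrable σ) (hσ0 : ∀ y, 0 ≤ σ y)
    (hσsupp : ∀ y < 0, σ y = 0) (hτ : Differentiable ℝ τ) {a b x S : ℝ}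
    (hS : ∀ z, b ≤ z → |deriv τ z| ≤ S) (ha : 0 ≤ a) (hx : a + b ≤ x) :
    ∫ y in Iio a, |σ y * (τ (x - y) - τ x)| ≤ a * (∫ y, σ y) * S := by
  have hS0 : 0 ≤ S := (abs_nonneg _).trans (hS b le_rfl)
  have hpointwise : ∀ y ∈ Iio a, |σ y * (τ (x - y) - τ x)| ≤ σ y * (a * S) := by
    intro y hy
    rw [abs_mul, abs_of_nonneg (hσ0 y)]
    rcases lt_or_ge y 0 with hy0 | hy0
    · simp [hσsupp y hy0]
    refine mul_le_mul_of_nonneg_left ?_ (hσ0 y)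
    calc |τ (x - y) - τ x| ≤ S * |x - y - x| :=
          abs_sub_le_of_abs_deriv_le hτ hS (by linarith [mem_Iio.1 hy]) (by linarith)
      _ = S * y := by rw [sub_sub_cancel_left, abs_neg, abs_of_nonneg hy0]
      _ ≤ a * S := by nlinarith [mem_Iio.1 hy]
  calc ∫ y in Iio a, |σ y * (τ (x - y) - τ x)|
      ≤ ∫ y in Iio a, σ y * (a * S) :=
        integral_mono_of_nonneg (Filter.Eventually.of_forall fun _ => abs_nonneg _)
          (hσ.mul_const _).integrableOn (ae_restrict_of_forall_mem measurableSet_Iio hpointwise)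
    _ = (∫ y in Iio a, σ y) * (a * S) := integral_mul_const _ _
    _ ≤ (∫ y, σ y) * (a * S) :=
        mul_le_mul_of_nonneg_right (setIntegral_le_integral hσ (Filter.Eventually.of_forall hσ0))
          (mul_nonneg ha hS0)
    _ = a * (∫ y, σ y) * S := by ring

lemma setIntegral_Ici_abs_mul_sub_le {σ τ : ℝ → ℝ} (hσ : Integrable σ) (hσ0 : ∀ y, 0 ≤ σ y)
    {T : ℝ} (hT : ∀ y, |τ y| ≤ T) (a x : ℝ) :
    ∫ y in Ici a, |σ y * (τ (x - y) - τ x)| ≤ 2 * (∫ y in Ici a, σ y) * T := by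
  have hpointwise : ∀ y ∈ Ici a, |σ y * (τ (x - y) - τ x)| ≤ σ y * (2 * T) := by
    intro y _
    rw [abs_mul, abs_of_nonneg (hσ0 y)]
    refine mul_le_mul_of_nonneg_left ?_ (hσ0 y)
    linarith [abs_sub (τ (x - y)) (τ x), hT (x - y), hT x]
  calc ∫ y in Ici a, |σ y * (τ (x - y) - τ x)|
      ≤ ∫ y in Ici a, σ y * (2 * T) :=
        integral_mono_of_nonneg (Filter.Eventually.of_forall fun _ => abs_nonneg _)
          (hσ.mul_const _).integrableOn (ae_restrict_of_forall_mem measurableSet_Ici hpointwise)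
    _ = 2 * (∫ y in Ici a, σ y) * T := by rw [integral_mul_const]; ring

theorem abs_rconv_sub_integral_mul_le {σ τ : ℝ → ℝ} (hσ : Integrable σ) (hσ0 : ∀ y, 0 ≤ σ y)
    (hσsupp : ∀ y < 0, σ y = 0) (hτ : Differentiable ℝ τ) {a b x S T : ℝ}
    (hS : ∀ z, b ≤ z → |deriv τ z| ≤ S) (hT : ∀ y, |τ y| ≤ T) (ha : 0 ≤ a) (hx : a + b ≤ x) :
    |rconv σ τ x - (∫ y, σ y) * τ x| ≤ a * (∫ y, σ y) * S + 2 * (∫ y in Ici a, σ y) * T := by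
  have hint : Integrable fun y => |σ y * (τ (x - y) - τ x)| := by
    simpa only [mul_sub, Pi.sub_apply] using
      ((hσ.mul_comp_const_sub hτ.continuous hT x).sub (hσ.mul_const (τ x))).abs
  rw [rconv_sub_integral_mul_eq hσ hτ.continuous hT]
  calc |∫ y, σ y * (τ (x - y) - τ x)|
      ≤ ∫ y, |σ y * (τ (x - y) - τ x)| := abs_integral_le_integral_abs
    _ = (∫ y in Iio a, |σ y * (τ (x - y) - τ x)|) + ∫ y in Ici a, |σ y * (τ (x - y) - τ x)| :=
        (intervalIntegral.integral_Iio_add_Ici hint.integrableOn hint.integrableOn).symm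
    _ ≤ _ := add_le_add (setIntegral_Iio_abs_mul_sub_le hσ hσ0 hσsupp hτ hS ha hx)
        (setIntegral_Ici_abs_mul_sub_le hσ hσ0 hT a x)

lemma SchwartzMap.bddAbove_range_abs (f : SchwartzMap ℝ ℝ) : BddAbove (range fun x => |f x|) :=
  ⟨_, by rintro _ ⟨x, rfl⟩; exact f.norm_le_seminorm ℝ x⟩

theorem real_integration_by_parts_general (σ τ : SchwartzMap ℝ ℝ)
    (hσ0 : ∀ x, 0 ≤ σ x) (hτ0 : ∀ x, 0 ≤ τ x)
    (hσsupp : ∀ x : ℝ, x < 0 → σ x = 0)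
    (a b : ℝ) (ha : 0 ≤ a) :
    ∀ x : ℝ, a + b ≤ x →
      |rconv (fun y => σ y) (fun y => τ y) x - (∫ y : ℝ, σ y) * τ x| ≤
        a * (∫ y : ℝ, σ y) * (⨆ y : Set.Ici b, |deriv (fun z => τ z) y|) +
          2 * (∫ y in Set.Ici a, σ y) * ⨆ x : ℝ, τ x := by
  intro x hx
  have hτ_bdd : BddAbove (range fun y => τ y) :=
    τ.bddAbove_range_abs.mono (by rintro _ ⟨y, rfl⟩; exact ⟨y, abs_of_nonneg (hτ0 y)⟩)
  have hτ'_bdd : BddAbove (range fun y : Ici b => |deriv (fun z => τ z) y|) :=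
    (SchwartzMap.derivCLM ℝ ℝ τ).bddAbove_range_abs.mono
      (by rintro _ ⟨y, rfl⟩; exact ⟨y, by simp only [SchwartzMap.derivCLM_apply]⟩)
  exact abs_rconv_sub_integral_mul_le σ.integrable hσ0 hσsupp τ.differentiable
    (fun z hz => le_ciSup hτ'_bdd (⟨z, hz⟩ : Ici b))
    (fun y => (abs_of_nonneg (hτ0 y)).trans_le (le_ciSup hτ_bdd y)) ha hx

theorem real_integration_by_parts (σ τ : SchwartzMap ℝ ℝ)
    (hσ0 : ∀ x, 0 ≤ σ x) (hτ0 : ∀ x, 0 ≤ τ x)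
    (hσsupp : ∀ x : ℝ, x < 0 → σ x = 0) (hτsupp : ∀ x : ℝ, x < 0 → τ x = 0)
    (a b : ℝ) (ha : 0 ≤ a) (hb : 0 ≤ b) :
    ∀ x : ℝ, a + b ≤ x →
      |rconv (fun y => σ y) (fun y => τ y) x - (∫ y : ℝ, σ y) * τ x| ≤
        a * (∫ y : ℝ, σ y) * (⨆ y : Set.Ici b, |deriv (fun z => τ z) y|) +
          2 * (∫ y in Set.Ici a, σ y) * ⨆ x : ℝ, τ x :=
  real_integration_by_parts_general σ τ hσ0 hτ0 hσsupp a b ha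
end

section
/- Let Q ∈ ℤ[X] and suppose there exist N ∈ ℕ and non-negative integers a_0, …, a_N, with a_n > 0 for at least one n ≥ 1, such that Q(t + t^{−1}) = ∑_{n=0}^N a_n·χ_n(t) in ℤ[t, t^{−1}]. Then: (i) Q'(2) > 0; (ii) |Q(y)| < Q(2) for every real y with −2 < y < 2; and (iii) |Q(−2)| = Q(2) if and only if all n with a_n > 0 have the same parity. -/
/-!
Evaluating `Q(t + t⁻¹) = ∑ aₙ χₙ(t)` at units `t` reduces everything to values of the characters.
For `n ≥ 1`, pairing the monomials `t^k` and `t^(-k)` writes `χₙ(t)` as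
`(∑_{l < 2^(j-1)} (t^(2l+1) + t^(-(2l+1)))) · ∏_{aᵢ = 1} (t^(2^i) + t^(-2^i))`.

* At `t = ±1`: `χₙ(1) = 2^(j + #{i | aᵢ = 1}) = dim T(n)` and, as `n + 1 = 2^j + ∑_{aᵢ = 1} 2^i`,
  `χₙ(-1) = (-1)ⁿ dim T(n)`. So `Q(2) = ∑ aₙ dim T(n)` and `Q(-2) = ∑ (-1)ⁿ aₙ dim T(n)`, which
  gives (iii).
* Every `y ∈ (-2, 2)` is `t + t⁻¹` with `|t| = 1` and `t² ≠ 1`. Each pair then has modulus at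
  most `2`, and `|t + t⁻¹| < 2`, so `|χₙ(t)| < dim T(n)` for `n ≥ 1`; this gives (ii).
* Every `y > 2` is `t + t⁻¹` with real `t > 1`. Each pair is then at least `y`, so
  `χₙ(t) ≥ dim T(n) + (y - 2)` for `n ≥ 1`. Hence `Q(y) ≥ Q(2) + (y - 2)` for `y > 2`, and
  `Q'(2) ≥ 1`.
-/

open LaurentPolynomial

/-- The formal character `χ_n(t)` of the indecomposable tilting module `T(n)` of `SL₂`
in characteristic 2, as a Laurent polynomial: writing
`n+1 = 2^j + a_{j−1}·2^{j−1} + ⋯ + a_0` in binary,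
`χ_n(t) = (∑_{l<2^j} t^{2^j−1−2l}) · ∏_{i : a_i = 1} (t^{2^i} + t^{−2^i})`. -/
noncomputable def chiT (n : ℕ) : LaurentPolynomial ℤ :=
  (∑ l ∈ Finset.range (2 ^ Nat.log 2 (n + 1)),
      T ((2 : ℤ) ^ Nat.log 2 (n + 1) - 1 - 2 * (l : ℤ))) *
    ∏ i ∈ (Finset.range (Nat.log 2 (n + 1))).filter (fun i => (n + 1).testBit i),
      (T ((2 : ℤ) ^ i) + T (-(2 : ℤ) ^ i))

open Finset
open Polynomial (aeval)
open scoped Polynomial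

theorem two_le_add_inv {t : ℝ} (ht : 0 < t) : 2 ≤ t + t⁻¹ := by
  nlinarith [mul_nonneg (sq_nonneg (t - 1)) (inv_nonneg.2 ht.le), mul_inv_cancel₀ ht.ne']

theorem add_inv_le_pow_add_inv_pow {t : ℝ} (ht : 1 ≤ t) {k : ℕ} (hk : k ≠ 0) :
    t + t⁻¹ ≤ t ^ k + t⁻¹ ^ k := by
  have hs : t ≤ t ^ k := le_self_pow₀ ht hk
  have ht0 : 0 < t := by linarith
  rw [inv_pow, ← sub_nonneg,
    show t ^ k + (t ^ k)⁻¹ - (t + t⁻¹) = (t ^ k - t) * (t ^ k * t - 1) / (t ^ k * t) by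
      field_simp; ring]
  exact div_nonneg (mul_nonneg (by linarith) (by nlinarith)) (by positivity)

theorem exists_one_lt_add_inv_eq {y : ℝ} (hy : 2 < y) : ∃ t : ℝ, 1 < t ∧ t + t⁻¹ = y := by
  set s := √(y ^ 2 - 4)
  have hs : s ^ 2 = y ^ 2 - 4 := Real.sq_sqrt (by nlinarith)
  have hinv : ((y + s) / 2)⁻¹ = (y - s) / 2 := inv_eq_of_mul_eq_one_right (by nlinarith)
  refine ⟨(y + s) / 2, by linarith [Real.sqrt_nonneg (y ^ 2 - 4)], ?_⟩
  rw [hinv]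
  ring

theorem exists_norm_eq_one_add_inv_eq {y : ℝ} (h₁ : -2 < y) (h₂ : y < 2) :
    ∃ u : ℂ, ‖u‖ = 1 ∧ u ^ 2 ≠ 1 ∧ u + u⁻¹ = y := by
  set s := √(1 - (y / 2) ^ 2)
  have hs : s ^ 2 = 1 - (y / 2) ^ 2 := Real.sq_sqrt (by nlinarith)
  have hs0 : 0 < s := Real.sqrt_pos.2 (by nlinarith)
  set u : ℂ := ⟨y / 2, s⟩
  have hnormSq : Complex.normSq u = 1 := by rw [Complex.normSq_mk]; nlinarith
  refine ⟨u, by rw [Complex.norm_def, hnormSq, Real.sqrt_one], fun h => ?_, ?_⟩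
  · rcases mul_self_eq_one_iff.1 ((sq u).symm.trans h) with h | h <;>
      exact hs0.ne' (by simpa [u] using congrArg Complex.im h)
  · rw [Complex.inv_def, hnormSq, inv_one, Complex.ofReal_one, mul_one, Complex.add_conj,
      show u.re = y / 2 from rfl]
    push_cast
    ring

theorem norm_pow_add_inv_pow_le_two {u : ℂ} (hu : ‖u‖ = 1) (k : ℕ) : ‖u ^ k + u⁻¹ ^ k‖ ≤ 2 := by
  refine (norm_add_le _ _).trans ?_
  rw [norm_pow, norm_pow, norm_inv, hu, inv_one, one_pow]
  norm_num

theorem norm_add_inv_lt_two {u : ℂ} (hu : ‖u‖ = 1) (hu2 : u ^ 2 ≠ 1) : ‖u + u⁻¹‖ < 2 := by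
  have hinv : ‖u⁻¹‖ = 1 := by rw [norm_inv, hu, inv_one]
  have hne : u ≠ u⁻¹ := fun h => hu2 <| by
    rw [sq]; nth_rewrite 2 [h]; exact mul_inv_cancel₀ (norm_ne_zero_iff.1 (by simp [hu]))
  calc ‖u + u⁻¹‖ < ‖u‖ + ‖u⁻¹‖ :=
        norm_add_lt_of_not_sameRay ((not_sameRay_iff_of_norm_eq (hu.trans hinv.symm)).2 hne)
    _ = 2 := by rw [hu, hinv]; norm_num

theorem HasDerivAt.le_of_forall_add_mul_le {f : ℝ → ℝ} {f' x c : ℝ} (hf : HasDerivAt f f' x)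
    (h : ∀ y, x < y → f x + c * (y - x) ≤ f y) : c ≤ f' := by
  refine ge_of_tendsto ((hasDerivAt_iff_tendsto_slope.1 hf).mono_left (nhdsGT_le_nhdsNE x))
    (eventually_nhdsWithin_of_forall fun y (hy : x < y) => ?_)
  rw [slope_def_field, le_div_iff₀ (sub_pos.2 hy)]
  linarith [h y hy]

section Parity

variable {R : Type*} [CommRing R] [LinearOrder R] [IsStrictOrderedRing R] {s : Finset ℕ}
  {c : ℕ → R}

theorem neg_one_pow_mul_sum_eq_sum_iff (hc : ∀ n ∈ s, 0 ≤ c n) (k : ℕ) :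
    (-1) ^ k * ∑ n ∈ s, (-1) ^ n * c n = ∑ n ∈ s, c n ↔ ∀ n ∈ s, 0 < c n → n % 2 = k % 2 := by
  rw [mul_sum, eq_comm, ← sub_eq_zero, ← sum_sub_distrib]
  simp_rw [← mul_assoc, ← pow_add, ← one_sub_mul]
  rw [sum_eq_zero_iff_of_nonneg fun n hn => ?nonneg]
  case nonneg =>
    rcases Nat.even_or_odd (k + n) with h | h <;> simp [h.neg_one_pow, hc n hn]
  refine forall₂_congr fun n hn => ?_
  rcases Nat.even_or_odd (k + n) with h | h
  · have : n % 2 = k % 2 := by have := Nat.even_iff.1 h; omega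
    simp [h.neg_one_pow, this]
  · have : n % 2 ≠ k % 2 := by have := Nat.odd_iff.1 h; omega
    simp only [h.neg_one_pow, this, imp_false, not_lt, sub_neg_eq_add, one_add_one_eq_two,
      mul_eq_zero, two_ne_zero, false_or]
    exact ⟨le_of_eq, fun h' => le_antisymm h' (hc n hn)⟩

theorem abs_sum_neg_one_pow_mul_eq_sum_iff (hc : ∀ n ∈ s, 0 ≤ c n) :
    |∑ n ∈ s, (-1) ^ n * c n| = ∑ n ∈ s, c n ↔
      ∀ n₁ n₂, n₁ ∈ s → n₂ ∈ s → 0 < c n₁ → 0 < c n₂ → n₁ % 2 = n₂ % 2 := by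
  have h₀ := neg_one_pow_mul_sum_eq_sum_iff hc 0
  have h₁ := neg_one_pow_mul_sum_eq_sum_iff hc 1
  rw [pow_zero, one_mul] at h₀
  rw [pow_one, neg_one_mul, neg_eq_iff_eq_neg] at h₁
  rw [abs_eq (sum_nonneg hc), h₀, h₁]
  constructor
  · rintro (h | h) n₁ n₂ hn₁ hn₂ hc₁ hc₂ <;> rw [h n₁ hn₁ hc₁, h n₂ hn₂ hc₂]
  · intro h
    by_cases hex : ∃ m ∈ s, 0 < c m
    · obtain ⟨m, hm, hcm⟩ := hex
      rcases Nat.mod_two_eq_zero_or_one m with hm2 | hm2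
      · exact Or.inl fun n hn hcn => (h n m hn hm hcn hcm).trans hm2
      · exact Or.inr fun n hn hcn => (h n m hn hm hcn hcm).trans hm2
    · exact Or.inl fun n hn hcn => absurd ⟨n, hn, hcn⟩ hex

end Parity

theorem aeval_intCast {A : Type*} [Ring A] (Q : ℤ[X]) (x : ℤ) : aeval (x : A) Q = Q.eval x := by
  simpa using Polynomial.aeval_algebraMap_apply_eq_algebraMap_eval (A := A) x Q

-- the `i < j` with `aᵢ = 1` in the binary expansion `n + 1 = 2^j + ∑ aᵢ 2^i`
def lowerBits (n : ℕ) : Finset ℕ :=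
  (range (Nat.log 2 (n + 1))).filter fun i => (n + 1).testBit i

theorem exists_log_eq_add_one {n : ℕ} (hn : 1 ≤ n) : ∃ j, Nat.log 2 (n + 1) = j + 1 :=
  Nat.exists_eq_add_one.mpr (Nat.log_pos one_lt_two (by omega))

theorem insert_log_lowerBits (n : ℕ) :
    insert (Nat.log 2 (n + 1)) (lowerBits n) = (n + 1).bitIndices.toFinset := by
  set j := Nat.log 2 (n + 1)
  have hlow : 2 ^ j ≤ n + 1 := Nat.pow_log_le_self 2 (by omega)
  have hhigh : n + 1 < 2 ^ (j + 1) := Nat.lt_pow_succ_log_self (by norm_num) _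
  ext i
  simp only [lowerBits, mem_insert, mem_filter, mem_range, List.mem_toFinset, Nat.mem_bitIndices]
  constructor
  · rintro (rfl | ⟨-, hi⟩)
    · rw [Nat.testBit_eq_decide_div_mod_eq, decide_eq_true_eq,
        Nat.div_eq_of_lt_le (k := 1) (by omega) (by rw [pow_succ] at hhigh; omega)]
    · exact hi
  · intro hi
    have hij : i ≤ j := by
      by_contra! h
      have := Nat.pow_le_pow_right two_pos h
      have := Nat.ge_two_pow_of_testBit hi
      omega
    obtain h | h := hij.eq_or_lt
    exacts [Or.inl h, Or.inr ⟨h, hi⟩]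

theorem two_pow_log_add_sum_lowerBits (n : ℕ) :
    2 ^ Nat.log 2 (n + 1) + ∑ i ∈ lowerBits n, 2 ^ i = n + 1 := by
  rw [← sum_insert (by simp [lowerBits]), insert_log_lowerBits,
    sum_toFinset_bitIndices_two_pow]

def tiltingDim (n : ℕ) : ℕ := 2 ^ (Nat.log 2 (n + 1) + #(lowerBits n))

noncomputable def symMonomial (k : ℕ) : ℤ[T;T⁻¹] := T k + T (-k)

theorem chiT_zero : chiT 0 = 1 := by
  simp [chiT]

theorem tiltingDim_zero : tiltingDim 0 = 1 := by
  simp [tiltingDim, lowerBits]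

theorem chiT_eq_sum_mul_prod {n : ℕ} (hn : 1 ≤ n) :
    chiT n = (∑ l ∈ range (2 ^ (Nat.log 2 (n + 1) - 1)), symMonomial (2 * l + 1)) *
      ∏ i ∈ lowerBits n, symMonomial (2 ^ i) := by
  obtain ⟨j, hj⟩ := exists_log_eq_add_one hn
  rw [chiT, hj, Nat.add_sub_cancel, pow_succ, mul_two, sum_range_add]
  simp only [symMonomial, sum_add_distrib, lowerBits, hj]
  congr 1
  rw [← sum_range_reflect]
  congr 1 <;> refine sum_congr rfl fun l hl => ?_
  · rw [Nat.cast_sub (Nat.le_sub_one_of_lt (mem_range.1 hl)), Nat.cast_sub Nat.one_le_two_pow]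
    congr 1; push_cast; ring
  · congr 1; push_cast; ring

theorem eval₂_symMonomial {A : Type*} [CommRing A] (u : Aˣ) (k : ℕ) :
    eval₂ (Int.castRingHom A) u (symMonomial k) = (u : A) ^ k + ((u⁻¹ : Aˣ) : A) ^ k := by
  simp [symMonomial, Units.val_pow_eq_pow_val]

theorem eval₂_chiT_one (n : ℕ) : eval₂ (Int.castRingHom ℤ) 1 (chiT n) = tiltingDim n := by
  rcases Nat.eq_zero_or_pos n with rfl | hn
  · simp [chiT_zero, tiltingDim_zero]
  obtain ⟨j, hj⟩ := exists_log_eq_add_one hn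
  rw [chiT_eq_sum_mul_prod hn]
  simp only [map_mul, map_sum, map_prod, eval₂_symMonomial]
  simp [tiltingDim, pow_add, hj]

theorem eval₂_chiT_neg_one (n : ℕ) :
    eval₂ (Int.castRingHom ℤ) (-1) (chiT n) = (-1) ^ n * tiltingDim n := by
  rcases Nat.eq_zero_or_pos n with rfl | hn
  · simp [chiT_zero, tiltingDim_zero]
  obtain ⟨j, hj⟩ := exists_log_eq_add_one hn
  set S := ∑ i ∈ lowerBits n, 2 ^ i
  have hsign : (-1 : ℤ) ^ n = -(-1) ^ S := by
    have hbin := two_pow_log_add_sum_lowerBits n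
    rw [hj, pow_succ] at hbin
    rw [show n = 2 * (2 ^ j - 1) + 1 + S by have := Nat.one_le_two_pow (n := j); omega]
    simp [pow_add, pow_mul]
  have hsum : ∑ l ∈ range (2 ^ j), ((-1 : ℤ) ^ (2 * l + 1) + (-1) ^ (2 * l + 1)) =
      -2 ^ (j + 1) := by
    simp [pow_succ, pow_mul]
  have hprod : ∏ i ∈ lowerBits n, ((-1 : ℤ) ^ 2 ^ i + (-1) ^ 2 ^ i) =
      2 ^ #(lowerBits n) * (-1) ^ S := by
    rw [← prod_pow_eq_pow_sum, ← prod_const, ← prod_mul_distrib]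
    exact prod_congr rfl fun _ _ => by ring
  rw [chiT_eq_sum_mul_prod hn, map_mul, map_sum, map_prod]
  simp only [eval₂_symMonomial, Units.val_neg, Units.val_one, inv_neg, inv_one, hj,
    Nat.add_sub_cancel]
  rw [hsum, hprod, hsign, tiltingDim, hj, pow_add]
  push_cast
  ring

theorem tiltingDim_add_le_eval₂_chiT {n : ℕ} (hn : 1 ≤ n) {u : ℝˣ} (hu : 1 < (u : ℝ)) :
    tiltingDim n + ((u : ℝ) + (u : ℝ)⁻¹ - 2) ≤ eval₂ (Int.castRingHom ℝ) u (chiT n) := by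
  obtain ⟨j, hj⟩ := exists_log_eq_add_one hn
  set t : ℝ := (u : ℝ)
  have hy := two_le_add_inv (t := t) (by linarith)
  rw [chiT_eq_sum_mul_prod hn, map_mul, map_sum, map_prod]
  simp only [eval₂_symMonomial, Units.val_inv_eq_inv_val, hj, Nat.add_sub_cancel]
  have hS : 2 ^ j * (t + t⁻¹) ≤ ∑ l ∈ range (2 ^ j), (t ^ (2 * l + 1) + t⁻¹ ^ (2 * l + 1)) := by
    calc (2 : ℝ) ^ j * (t + t⁻¹) = ∑ _l ∈ range (2 ^ j), (t + t⁻¹) := by simp [mul_add]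
      _ ≤ _ := sum_le_sum fun l _ => add_inv_le_pow_add_inv_pow hu.le (Nat.succ_ne_zero (2 * l))
  have hP : (2 : ℝ) ^ #(lowerBits n) ≤ ∏ i ∈ lowerBits n, (t ^ 2 ^ i + t⁻¹ ^ 2 ^ i) := by
    rw [← prod_const]
    exact prod_le_prod (fun _ _ => zero_le_two) fun i _ =>
      hy.trans (add_inv_le_pow_add_inv_pow hu.le (pow_ne_zero i two_ne_zero))
  have h1 : (1 : ℝ) ≤ 2 ^ j * 2 ^ #(lowerBits n) := one_le_mul_of_one_le_of_one_le
    (one_le_pow₀ one_le_two) (one_le_pow₀ one_le_two)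
  calc (tiltingDim n : ℝ) + (t + t⁻¹ - 2)
      ≤ 2 ^ j * (t + t⁻¹) * 2 ^ #(lowerBits n) := by
        simp only [tiltingDim, hj, pow_add, pow_one]
        push_cast
        nlinarith [mul_nonneg (sub_nonneg.2 h1) (sub_nonneg.2 hy)]
    _ ≤ _ := mul_le_mul hS hP (by positivity) (by positivity)

theorem tiltingDim_le_eval₂_chiT (n : ℕ) {u : ℝˣ} (hu : 1 < (u : ℝ)) :
    tiltingDim n ≤ eval₂ (Int.castRingHom ℝ) u (chiT n) := by
  rcases Nat.eq_zero_or_pos n with rfl | hn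
  · simp [chiT_zero, tiltingDim_zero]
  · linarith [tiltingDim_add_le_eval₂_chiT hn hu, two_le_add_inv (t := (u : ℝ)) (by linarith)]

theorem norm_eval₂_chiT_lt {n : ℕ} (hn : 1 ≤ n) {u : ℂˣ} (hu : ‖(u : ℂ)‖ = 1)
    (hu2 : (u : ℂ) ^ 2 ≠ 1) : ‖eval₂ (Int.castRingHom ℂ) u (chiT n)‖ < tiltingDim n := by
  obtain ⟨j, hj⟩ := exists_log_eq_add_one hn
  rw [chiT_eq_sum_mul_prod hn, map_mul, map_sum, map_prod, norm_mul, norm_prod]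
  simp only [eval₂_symMonomial, Units.val_inv_eq_inv_val, hj, Nat.add_sub_cancel]
  set S := ∑ l ∈ range (2 ^ j), ((u : ℂ) ^ (2 * l + 1) + (u : ℂ)⁻¹ ^ (2 * l + 1))
  have hS : ‖S‖ < 2 ^ (j + 1) := by
    refine (norm_sum_le _ _).trans_lt ?_
    calc _ < ∑ l ∈ range (2 ^ j), (2 : ℝ) :=
          sum_lt_sum (fun l _ => norm_pow_add_inv_pow_le_two hu _)
            ⟨0, by simp, by simpa using norm_add_inv_lt_two hu hu2⟩
      _ = 2 ^ (j + 1) := by simp [pow_succ]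
  have hP : ∏ i ∈ lowerBits n, ‖(u : ℂ) ^ 2 ^ i + (u : ℂ)⁻¹ ^ 2 ^ i‖ ≤ 2 ^ #(lowerBits n) := by
    rw [← prod_const]
    exact prod_le_prod (fun _ _ => norm_nonneg _) fun i _ => norm_pow_add_inv_pow_le_two hu _
  calc _ ≤ ‖S‖ * 2 ^ #(lowerBits n) := mul_le_mul_of_nonneg_left hP (norm_nonneg _)
    _ < 2 ^ (j + 1) * 2 ^ #(lowerBits n) := mul_lt_mul_of_pos_right hS (by positivity)
    _ = tiltingDim n := by simp [tiltingDim, hj, pow_add]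

section CharacterSum

variable {Q : ℤ[X]} {N : ℕ} {a : ℕ → ℕ}

theorem aeval_add_inv_eq_sum {A : Type*} [CommRing A]
    (hQ : aeval (T 1 + T (-1)) Q = ∑ n ∈ range (N + 1), (a n : ℤ[T;T⁻¹]) * chiT n) (u : Aˣ) :
    aeval ((u : A) + ((u⁻¹ : Aˣ) : A)) Q =
      ∑ n ∈ range (N + 1), (a n : A) * eval₂ (Int.castRingHom A) u (chiT n) := by
  have hT : eval₂ (Int.castRingHom A) u (T 1 + T (-1)) = (u : A) + ((u⁻¹ : Aˣ) : A) := by simp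
  have h := Polynomial.hom_eval₂ Q (algebraMap ℤ ℤ[T;T⁻¹]) (eval₂ (Int.castRingHom A) u)
    (T 1 + T (-1))
  rw [← Polynomial.aeval_def, hQ, hT,
    RingHom.ext_int ((eval₂ (Int.castRingHom A) u).comp (algebraMap ℤ ℤ[T;T⁻¹])) (algebraMap ℤ A),
    ← Polynomial.aeval_def] at h
  simpa using h.symm

theorem eval_two_eq_sum
    (hQ : aeval (T 1 + T (-1)) Q = ∑ n ∈ range (N + 1), (a n : ℤ[T;T⁻¹]) * chiT n) :
    Q.eval 2 = ∑ n ∈ range (N + 1), (a n : ℤ) * tiltingDim n := by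
  have h := aeval_add_inv_eq_sum hQ (1 : ℤˣ)
  simp only [eval₂_chiT_one, Polynomial.coe_aeval_eq_eval] at h
  simpa using h

theorem eval_neg_two_eq_sum
    (hQ : aeval (T 1 + T (-1)) Q = ∑ n ∈ range (N + 1), (a n : ℤ[T;T⁻¹]) * chiT n) :
    Q.eval (-2) = ∑ n ∈ range (N + 1), (-1) ^ n * ((a n : ℤ) * tiltingDim n) := by
  have h := aeval_add_inv_eq_sum hQ (-1 : ℤˣ)
  simp only [eval₂_chiT_neg_one, Polynomial.coe_aeval_eq_eval] at h
  simpa [mul_left_comm] using h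

theorem eval_two_add_sub_le_aeval
    (hQ : aeval (T 1 + T (-1)) Q = ∑ n ∈ range (N + 1), (a n : ℤ[T;T⁻¹]) * chiT n)
    (hnontriv : ∃ n, 1 ≤ n ∧ n ≤ N ∧ 0 < a n) {y : ℝ} (hy : 2 < y) :
    ((Q.eval 2 : ℤ) : ℝ) + (y - 2) ≤ aeval y Q := by
  obtain ⟨n₀, hn₀, hn₀N, ha₀⟩ := hnontriv
  obtain ⟨t, ht, rfl⟩ := exists_one_lt_add_inv_eq hy
  set u := Units.mk0 t (by positivity)
  have hu : (u : ℝ) = t := rfl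
  set χ : ℕ → ℝ := fun n => eval₂ (Int.castRingHom ℝ) u (chiT n)
  have hQt : aeval (t + t⁻¹) Q = ∑ n ∈ range (N + 1), (a n : ℝ) * χ n := by
    rw [← aeval_add_inv_eq_sum hQ u]
    simp [hu]
  rw [hQt, eval_two_eq_sum hQ]
  push_cast
  have hχ₀ : tiltingDim n₀ + (t + t⁻¹ - 2) ≤ χ n₀ := tiltingDim_add_le_eval₂_chiT hn₀ (u := u) ht
  have ha₀ : (1 : ℝ) ≤ a n₀ := by exact_mod_cast ha₀
  have hgap : t + t⁻¹ - 2 ≤ ∑ n ∈ range (N + 1), (a n : ℝ) * (χ n - tiltingDim n) :=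
    calc t + t⁻¹ - 2 ≤ a n₀ * (χ n₀ - tiltingDim n₀) := by
          nlinarith [mul_nonneg (sub_nonneg.2 ha₀) (sub_nonneg.2 hχ₀)]
      _ ≤ _ := single_le_sum (fun n _ => mul_nonneg (Nat.cast_nonneg _)
          (sub_nonneg.2 (tiltingDim_le_eval₂_chiT n (u := u) ht)))
          (mem_range.2 (Nat.lt_succ_of_le hn₀N))
  simp only [mul_sub, sum_sub_distrib] at hgap
  linarith

theorem abs_aeval_lt_eval_two
    (hQ : aeval (T 1 + T (-1)) Q = ∑ n ∈ range (N + 1), (a n : ℤ[T;T⁻¹]) * chiT n)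
    (hnontriv : ∃ n, 1 ≤ n ∧ n ≤ N ∧ 0 < a n) {y : ℝ} (h₁ : -2 < y) (h₂ : y < 2) :
    |aeval y Q| < ((Q.eval 2 : ℤ) : ℝ) := by
  obtain ⟨n₀, hn₀, hn₀N, ha₀⟩ := hnontriv
  obtain ⟨z, hz, hz2, hzy⟩ := exists_norm_eq_one_add_inv_eq h₁ h₂
  set u := Units.mk0 z (norm_ne_zero_iff.1 (by simp [hz]))
  have hu : (u : ℂ) = z := rfl
  have hle : ∀ n, ‖eval₂ (Int.castRingHom ℂ) u (chiT n)‖ ≤ tiltingDim n := fun n => by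
    rcases Nat.eq_zero_or_pos n with rfl | hn
    · simp [chiT_zero, tiltingDim_zero]
    · exact (norm_eval₂_chiT_lt hn (hu ▸ hz) (hu ▸ hz2)).le
  have hQy : ((aeval y Q : ℝ) : ℂ) =
      ∑ n ∈ range (N + 1), (a n : ℂ) * eval₂ (Int.castRingHom ℂ) u (chiT n) := by
    rw [← aeval_add_inv_eq_sum hQ u, ← Complex.coe_algebraMap,
      ← Polynomial.aeval_algebraMap_apply, Complex.coe_algebraMap]
    simp [hu, hzy]
  rw [← Real.norm_eq_abs, ← Complex.norm_real, hQy, eval_two_eq_sum hQ]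
  push_cast
  refine (norm_sum_le _ _).trans_lt (sum_lt_sum (fun n _ => ?_) ⟨n₀, ?_, ?_⟩)
  · rw [norm_mul, Complex.norm_natCast]
    exact mul_le_mul_of_nonneg_left (hle n) (Nat.cast_nonneg _)
  · exact mem_range.2 (Nat.lt_succ_of_le hn₀N)
  · rw [norm_mul, Complex.norm_natCast]
    exact mul_lt_mul_of_pos_left (norm_eval₂_chiT_lt hn₀ (hu ▸ hz) (hu ▸ hz2))
      (by exact_mod_cast ha₀)

theorem abs_eval_neg_two_eq_eval_two_iff
    (hQ : aeval (T 1 + T (-1)) Q = ∑ n ∈ range (N + 1), (a n : ℤ[T;T⁻¹]) * chiT n) :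
    |Q.eval (-2)| = Q.eval 2 ↔
      ∀ n₁ n₂, n₁ ≤ N → n₂ ≤ N → 0 < a n₁ → 0 < a n₂ → n₁ % 2 = n₂ % 2 := by
  have hpos : ∀ n, 0 < (a n : ℤ) * tiltingDim n ↔ 0 < a n := fun n => by
    rw [mul_pos_iff_of_pos_right (by simp [tiltingDim]), Nat.cast_pos]
  rw [eval_neg_two_eq_sum hQ, eval_two_eq_sum hQ,
    abs_sum_neg_one_pow_mul_eq_sum_iff fun n _ => by positivity]
  simp only [mem_range, Nat.lt_succ_iff, hpos]

end CharacterSum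

theorem tilting_character_bounds (Q : Polynomial ℤ) (N : ℕ) (a : ℕ → ℕ)
    (hnontriv : ∃ n, 1 ≤ n ∧ n ≤ N ∧ 0 < a n)
    (hQ : Polynomial.aeval (T 1 + T (-1)) Q =
      ∑ n ∈ Finset.range (N + 1), (a n : LaurentPolynomial ℤ) * chiT n) :
    0 < Q.derivative.eval 2 ∧
    (∀ y : ℝ, -2 < y → y < 2 →
      |Polynomial.aeval y Q| < ((Q.eval 2 : ℤ) : ℝ)) ∧
    (|Q.eval (-2)| = Q.eval 2 ↔
      ∀ n₁ n₂, n₁ ≤ N → n₂ ≤ N → 0 < a n₁ → 0 < a n₂ → n₁ % 2 = n₂ % 2) := by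
  refine ⟨?_, fun y h₁ h₂ => abs_aeval_lt_eval_two hQ hnontriv h₁ h₂,
    abs_eval_neg_two_eq_eval_two_iff hQ⟩
  have h : (1 : ℝ) ≤ aeval (2 : ℝ) (Polynomial.derivative Q) :=
    (Q.hasDerivAt_aeval 2).le_of_forall_add_mul_le fun y hy => by
      simpa [← aeval_intCast Q 2] using eval_two_add_sub_le_aeval hQ hnontriv hy
  rw [← Int.cast_ofNat, aeval_intCast] at h
  exact_mod_cast h
end
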